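/- arXiv:2601.02892 — 3 statements merged into one kernel-verified Lean document; each statement's English description precedes it below -/
import Mathlib

section
/- Let G̃ be obtained by Construction 1 from (G, H, v_c), with adjacency matrix Ã, and let v_c^1 = (v_c,1) and v_c^2 = (v_c,2) denote the two copies of the fixed vertex. Then the subspaces span{Ã^k(e_{v_c^1} + e_{v_c^2}) : k ≥ 0} and span{Ã^k(e_{v_c^1} − e_{v_c^2}) : k ≥ 0} of ℝ^{V(G̃)} are orthogonal to each other; that is, v_c^1 and v_c^2 are A-cospectral in G̃. -/
set_option linter.unusedSectionVars false
set_option maxHeartbeats 1000000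

open SimpleGraph Matrix

/-- `v` and `w` lie in the same orbit under the automorphisms of `G` fixing `vc`. -/
def SameOrbit {V : Type*} (G : SimpleGraph V) (vc v w : V) : Prop :=
  ∃ φ : G ≃g G, φ vc = vc ∧ φ v = w

/-- `Gt` is obtained from `(G, H, vc)` by Construction 1: the vertex set is
`V × Fin 2 ⊕ W`, each copy of `G` is induced, there are no edges between the two copies,
`H` is induced on `W`, and every vertex of `H` has the same number of neighbours in
corresponding orbits of the two copies of `G`. -/
def IsConstruction1 {V W : Type*} (G : SimpleGraph V) (H : SimpleGraph W)
    (vc : V) (Gt : SimpleGraph (V × Fin 2 ⊕ W)) : Prop :=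
  (∀ i : Fin 2, ∀ v w : V, Gt.Adj (Sum.inl (v, i)) (Sum.inl (w, i)) ↔ G.Adj v w) ∧
  (∀ v w : V, ¬ Gt.Adj (Sum.inl (v, 0)) (Sum.inl (w, 1))) ∧
  (∀ v w : W, Gt.Adj (Sum.inr v) (Sum.inr w) ↔ H.Adj v w) ∧
  (∀ w : W, ∀ u : V,
    Nat.card {v : V // SameOrbit G vc u v ∧ Gt.Adj (Sum.inl (v, 0)) (Sum.inr w)} =
    Nat.card {v : V // SameOrbit G vc u v ∧ Gt.Adj (Sum.inl (v, 1)) (Sum.inr w)})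

section aux
variable {V W : Type*} [Fintype V] [Fintype W] [DecidableEq V] [DecidableEq W]
variable {G : SimpleGraph V} {vc : V}

lemma sameOrbit_refl (v : V) : SameOrbit G vc v v := ⟨Iso.refl, rfl, rfl⟩

lemma sameOrbit_symm {v w : V} (h : SameOrbit G vc v w) : SameOrbit G vc w v := by
  obtain ⟨φ, h1, h2⟩ := h
  refine ⟨φ.symm, ?_, ?_⟩
  · exact φ.toEquiv.symm_apply_eq.mpr h1.symm
  · exact φ.toEquiv.symm_apply_eq.mpr h2.symm

lemma sameOrbit_trans {u v w : V} (h : SameOrbit G vc u v) (h' : SameOrbit G vc v w) :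
    SameOrbit G vc u w := by
  obtain ⟨φ, h1, h2⟩ := h
  obtain ⟨ψ, h1', h2'⟩ := h'
  refine ⟨φ.trans ψ, ?_, ?_⟩
  · show ψ (φ vc) = vc; rw [h1, h1']
  · show ψ (φ u) = w; rw [h2, h2']

lemma sameOrbit_vc {v : V} (h : SameOrbit G vc vc v) : v = vc := by
  obtain ⟨φ, h1, h2⟩ := h; rw [← h2, h1]

def orbitSetoid (G : SimpleGraph V) (vc : V) : Setoid V :=
  ⟨SameOrbit G vc, ⟨sameOrbit_refl, sameOrbit_symm, sameOrbit_trans⟩⟩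

/-- The key invariant subspace. -/
def DSub (G : SimpleGraph V) (vc : V) (W : Type*) : Submodule ℝ (V × Fin 2 ⊕ W → ℝ) where
  carrier := {x | (∀ v, x (Sum.inl (v, 1)) = - x (Sum.inl (v, 0))) ∧
      (∀ w, x (Sum.inr w) = 0) ∧
      (∀ v v', SameOrbit G vc v v' → x (Sum.inl (v, 0)) = x (Sum.inl (v', 0)))}
  add_mem' := by
    rintro x y ⟨hx1, hx2, hx3⟩ ⟨hy1, hy2, hy3⟩
    refine ⟨fun v => ?_, fun w => ?_, fun v v' h => ?_⟩
    · simp only [Pi.add_apply, hx1 v, hy1 v]; ring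
    · simp [hx2 w, hy2 w]
    · simp [hx3 v v' h, hy3 v v' h]
  zero_mem' := ⟨by simp, by simp, by simp⟩
  smul_mem' := by
    rintro c x ⟨hx1, hx2, hx3⟩
    refine ⟨fun v => ?_, fun w => ?_, fun v v' h => ?_⟩
    · simp [hx1 v]
    · simp [hx2 w]
    · simp [hx3 v v' h]

end aux

section main
variable {V W : Type*} [Fintype V] [Fintype W] [DecidableEq V] [DecidableEq W]
variable {G : SimpleGraph V} {H : SimpleGraph W} {vc : V}
variable {Gt : SimpleGraph (V × Fin 2 ⊕ W)} [DecidableRel Gt.Adj]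

lemma mulVec_apply' (a : V × Fin 2 ⊕ W) (x : V × Fin 2 ⊕ W → ℝ) :
    (Gt.adjMatrix ℝ *ᵥ x) a = ∑ b, if Gt.Adj a b then x b else 0 := by
  rw [adjMatrix_mulVec_apply, neighborFinset_eq_filter, Finset.sum_filter]

lemma sum_vanish (hC : IsConstruction1 G H vc Gt) (w : W)
    (x : V × Fin 2 ⊕ W → ℝ)
    (ho : ∀ v v', SameOrbit G vc v v' → x (Sum.inl (v, 0)) = x (Sum.inl (v', 0))) :
    ∑ v : V, (if Gt.Adj (Sum.inl (v, 0)) (Sum.inr w) then x (Sum.inl (v, 0)) else 0) =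
    ∑ v : V, (if Gt.Adj (Sum.inl (v, 1)) (Sum.inr w) then x (Sum.inl (v, 0)) else 0) := by
  classical
  rw [← Finset.sum_fiberwise Finset.univ (Quotient.mk (orbitSetoid G vc)) _,
      ← Finset.sum_fiberwise Finset.univ (Quotient.mk (orbitSetoid G vc)) _]
  refine Finset.sum_congr rfl fun q _ => ?_
  induction q using Quotient.inductionOn with
  | h u =>
    have hfib : ∀ (i : Fin 2),
        (Finset.univ.filter fun v =>
            Quotient.mk (orbitSetoid G vc) v = Quotient.mk (orbitSetoid G vc) u).filter
          (fun v => Gt.Adj (Sum.inl (v, i)) (Sum.inr w)) =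
        Finset.univ.filter
          (fun v => SameOrbit G vc u v ∧ Gt.Adj (Sum.inl (v, i)) (Sum.inr w)) := by
      intro i
      rw [Finset.filter_filter]
      refine Finset.filter_congr fun v _ => ?_
      constructor
      · rintro ⟨hq, ha⟩
        exact ⟨sameOrbit_symm (Quotient.eq.mp hq), ha⟩
      · rintro ⟨hq, ha⟩
        exact ⟨Quotient.eq.mpr (sameOrbit_symm hq), ha⟩
    have hx : ∀ v ∈ Finset.univ.filter fun v =>
        Quotient.mk (orbitSetoid G vc) v = Quotient.mk (orbitSetoid G vc) u,
        x (Sum.inl (v, 0)) = x (Sum.inl (u, 0)) := by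
      intro v hv
      simp only [Finset.mem_filter] at hv
      exact ho v u (Quotient.eq.mp hv.2)
    have key : ∀ (i : Fin 2),
        ∑ v ∈ Finset.univ.filter (fun v =>
            Quotient.mk (orbitSetoid G vc) v = Quotient.mk (orbitSetoid G vc) u),
          (if Gt.Adj (Sum.inl (v, i)) (Sum.inr w) then x (Sum.inl (v, 0)) else 0) =
        (Finset.univ.filter
          (fun v => SameOrbit G vc u v ∧ Gt.Adj (Sum.inl (v, i)) (Sum.inr w))).card
          * x (Sum.inl (u, 0)) := by
      intro i
      calc ∑ v ∈ Finset.univ.filter (fun v =>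
              Quotient.mk (orbitSetoid G vc) v = Quotient.mk (orbitSetoid G vc) u),
            (if Gt.Adj (Sum.inl (v, i)) (Sum.inr w) then x (Sum.inl (v, 0)) else 0)
          = ∑ v ∈ Finset.univ.filter (fun v =>
              Quotient.mk (orbitSetoid G vc) v = Quotient.mk (orbitSetoid G vc) u),
            (if Gt.Adj (Sum.inl (v, i)) (Sum.inr w) then x (Sum.inl (u, 0)) else 0) :=
            Finset.sum_congr rfl fun v hv => by
              by_cases h : Gt.Adj (Sum.inl (v, i)) (Sum.inr w) <;> simp [h, hx v hv]
        _ = ∑ _v ∈ ((Finset.univ.filter fun v =>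
              Quotient.mk (orbitSetoid G vc) v = Quotient.mk (orbitSetoid G vc) u).filter
              (fun v => Gt.Adj (Sum.inl (v, i)) (Sum.inr w))), x (Sum.inl (u, 0)) :=
            (Finset.sum_filter _ _).symm
        _ = _ := by rw [hfib i, Finset.sum_const, nsmul_eq_mul]
    rw [key 0, key 1]
    have hcount := hC.2.2.2 w u
    rw [Nat.card_eq_fintype_card, Nat.card_eq_fintype_card,
        Fintype.card_subtype, Fintype.card_subtype] at hcount
    rw [hcount]


lemma mulVec_mem_DSub (hC : IsConstruction1 G H vc Gt) {x : V × Fin 2 ⊕ W → ℝ}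
    (hx : x ∈ DSub G vc W) : Gt.adjMatrix ℝ *ᵥ x ∈ DSub G vc W := by
  classical
  obtain ⟨h1, h2, h3⟩ := hx
  obtain ⟨hcopy, hcross, hH, hcount⟩ := hC
  have hsplit : ∀ a, (Gt.adjMatrix ℝ *ᵥ x) a =
      ∑ v : V, ((if Gt.Adj a (Sum.inl (v, 0)) then x (Sum.inl (v, 0)) else 0) +
        (if Gt.Adj a (Sum.inl (v, 1)) then x (Sum.inl (v, 1)) else 0)) := by
    intro a
    rw [mulVec_apply', Fintype.sum_sum_type]
    have hz : ∑ w : W, (if Gt.Adj a (Sum.inr w) then x (Sum.inr w) else 0) = 0 := by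
      refine Finset.sum_eq_zero fun w _ => ?_
      rw [h2 w, ite_self]
    rw [hz, add_zero, Fintype.sum_prod_type]
    refine Finset.sum_congr rfl fun v _ => ?_
    rw [Fin.sum_univ_two]
  have hval0 : ∀ v : V, (Gt.adjMatrix ℝ *ᵥ x) (Sum.inl (v, 0)) =
      ∑ u : V, (if G.Adj v u then x (Sum.inl (u, 0)) else 0) := by
    intro v
    rw [hsplit]
    refine Finset.sum_congr rfl fun u _ => ?_
    rw [if_neg (hcross v u), add_zero]
    congr 1
    · exact propext (hcopy 0 v u)
  have hval1 : ∀ v : V, (Gt.adjMatrix ℝ *ᵥ x) (Sum.inl (v, 1)) =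
      - ∑ u : V, (if G.Adj v u then x (Sum.inl (u, 0)) else 0) := by
    intro v
    rw [hsplit, ← Finset.sum_neg_distrib]
    refine Finset.sum_congr rfl fun u _ => ?_
    have hc : ¬ Gt.Adj (Sum.inl (v, 1)) (Sum.inl (u, 0)) := fun h => hcross u v h.symm
    rw [if_neg hc, zero_add]
    by_cases h : G.Adj v u
    · rw [if_pos ((hcopy 1 v u).mpr h), if_pos h, h1 u]
    · rw [if_neg (fun hh => h ((hcopy 1 v u).mp hh)), if_neg h, neg_zero]
  refine ⟨fun v => by rw [hval0, hval1], fun w => ?_, fun v v' hvv' => ?_⟩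
  · -- W component vanishes
    rw [hsplit]
    have : ∀ v : V,
        ((if Gt.Adj (Sum.inr w) (Sum.inl (v, 0)) then x (Sum.inl (v, 0)) else 0) +
          (if Gt.Adj (Sum.inr w) (Sum.inl (v, 1)) then x (Sum.inl (v, 1)) else 0)) =
        ((if Gt.Adj (Sum.inl (v, 0)) (Sum.inr w) then x (Sum.inl (v, 0)) else 0) -
          (if Gt.Adj (Sum.inl (v, 1)) (Sum.inr w) then x (Sum.inl (v, 0)) else 0)) := by
      intro v
      rw [if_congr (Gt.adj_comm (Sum.inr w) (Sum.inl (v, 0))) rfl rfl,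
        if_congr (Gt.adj_comm (Sum.inr w) (Sum.inl (v, 1))) rfl rfl]
      by_cases ha : Gt.Adj (Sum.inl (v, 1)) (Sum.inr w) <;>
        simp [ha, h1 v, sub_eq_add_neg]
    rw [Finset.sum_congr rfl fun v _ => this v, Finset.sum_sub_distrib,
      sum_vanish ⟨hcopy, hcross, hH, hcount⟩ w x h3, sub_self]
  · -- orbit constancy
    rw [hval0, hval0]
    obtain ⟨φ, hφvc, hφv⟩ := hvv'
    rw [← Equiv.sum_comp φ.toEquiv (fun u => if G.Adj v' u then x (Sum.inl (u, 0)) else 0)]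
    refine Finset.sum_congr rfl fun u _ => ?_
    have hadj : G.Adj v' (φ.toEquiv u) ↔ G.Adj v u := by
      rw [← hφv]
      exact φ.map_adj_iff
    have hxu : x (Sum.inl ((φ.toEquiv u : V), 0)) = x (Sum.inl (u, 0)) :=
      (h3 u (φ.toEquiv u) ⟨φ, hφvc, rfl⟩).symm
    by_cases h : G.Adj v u
    · rw [if_pos (hadj.mpr h), if_pos h, hxu]
    · rw [if_neg (fun hh => h (hadj.mp hh)), if_neg h]

lemma pow_mulVec_mem_DSub (hC : IsConstruction1 G H vc Gt) (k : ℕ)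
    {x : V × Fin 2 ⊕ W → ℝ} (hx : x ∈ DSub G vc W) :
    (Gt.adjMatrix ℝ ^ k) *ᵥ x ∈ DSub G vc W := by
  induction k with
  | zero => simpa using hx
  | succ n ih =>
    rw [pow_succ', ← Matrix.mulVec_mulVec]
    exact mulVec_mem_DSub hC ih

lemma base_mem_DSub :
    (Pi.single (Sum.inl (vc, 0)) 1 - Pi.single (Sum.inl (vc, 1)) 1 : V × Fin 2 ⊕ W → ℝ)
      ∈ DSub G vc W := by
  have h01 : (0 : Fin 2) ≠ 1 := by decide
  have hval : ∀ u : V,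
      (Pi.single (Sum.inl (vc, 0)) 1 - Pi.single (Sum.inl (vc, 1)) 1 : V × Fin 2 ⊕ W → ℝ)
        (Sum.inl (u, 0)) = if u = vc then (1 : ℝ) else 0 := by
    intro u
    by_cases h : u = vc
    · subst h; simp [Pi.single_apply, h01]
    · simp [Pi.single_apply, h, h01]
  refine ⟨fun v => ?_, fun w => by simp [Pi.single_apply], fun v v' h => ?_⟩
  · by_cases h : v = vc
    · subst h; simp [Pi.single_apply, h01, h01.symm]
    · simp [Pi.single_apply, h, h01, h01.symm]
  · rw [hval, hval]
    by_cases hv : v = vc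
    · subst hv
      rw [if_pos rfl, if_pos (sameOrbit_vc h)]
    · have hv' : v' ≠ vc := fun hh => hv (sameOrbit_vc (hh ▸ sameOrbit_symm h))
      rw [if_neg hv, if_neg hv']


lemma symm_dot {α : Type*} [Fintype α] [DecidableEq α] {A : Matrix α α ℝ} (hA : A.IsSymm)
    (u v : α → ℝ) : (A *ᵥ u) ⬝ᵥ v = u ⬝ᵥ (A *ᵥ v) := by
  rw [Matrix.dotProduct_mulVec, ← Matrix.mulVec_transpose, hA.eq]

end main

/-- Vertices `u` and `v` are `A`-cospectral for the matrix `A`: the subspaces spanned by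
`A^k (e_u + e_v)` and by `A^k (e_u - e_v)` are orthogonal. -/
def ACospectral {α : Type*} [Fintype α] [DecidableEq α] (A : Matrix α α ℝ) (u v : α) : Prop :=
  ∀ x ∈ Submodule.span ℝ
      {z : α → ℝ | ∃ k : ℕ, z = (A ^ k) *ᵥ (Pi.single u 1 + Pi.single v 1)},
    ∀ y ∈ Submodule.span ℝ
      {z : α → ℝ | ∃ k : ℕ, z = (A ^ k) *ᵥ (Pi.single u 1 - Pi.single v 1)},
      x ⬝ᵥ y = 0

theorem construction1_ACospectral {V W : Type*} [Fintype V] [Fintype W]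
    [DecidableEq V] [DecidableEq W]
    (G : SimpleGraph V) (H : SimpleGraph W) (vc : V)
    (Gt : SimpleGraph (V × Fin 2 ⊕ W)) [DecidableRel Gt.Adj]
    (hC : IsConstruction1 G H vc Gt) :
    ACospectral (Gt.adjMatrix ℝ) (Sum.inl (vc, 0)) (Sum.inl (vc, 1)) := by
  intro x hx y hy
  have hyD : y ∈ DSub G vc W := by
    refine Submodule.span_le.mpr ?_ hy
    rintro z ⟨k, rfl⟩
    exact pow_mulVec_mem_DSub hC k base_mem_DSub
  induction hx using Submodule.span_induction with
  | mem z hz =>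
    obtain ⟨k, rfl⟩ := hz
    rw [symm_dot ((isSymm_adjMatrix Gt).pow k)]
    obtain ⟨hd1, hd2, hd3⟩ := pow_mulVec_mem_DSub hC k hyD
    rw [add_dotProduct, single_dotProduct, single_dotProduct, one_mul, one_mul,
      hd1 vc]
    ring
  | zero => simp
  | add a b _ _ ha hb => rw [add_dotProduct, ha, hb, add_zero]
  | smul c a _ ha => rw [smul_dotProduct, ha, smul_zero]
end

section
/- Let G̃ be obtained by Construction 1 from (G, H, v_c), with adjacency matrix Ã, let A be the adjacency matrix of G, and write v_c^1 = (v_c,1), v_c^2 = (v_c,2). Let μ be an eigenvalue of Ã that is not induced by G, i.e., either μ is not an eigenvalue of A, or E_μ e_{v_c} = 0 where E_μ is the orthogonal projection onto the μ-eigenspace of A. Then the orthogonal projection Ẽ_μ onto the μ-eigenspace of Ã satisfies Ẽ_μ e_{v_c^1} = Ẽ_μ e_{v_c^2}. -/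
open SimpleGraph Matrix

/-- `P` is the orthogonal projection of `ℝ^α` onto the `lam`-eigenspace of `A`.
If `lam` is not an eigenvalue of `A`, the only matrix satisfying this is `P = 0`,
so this also encodes "the zero map if `lam` is not an eigenvalue". -/
def IsEigProjection {α : Type*} [Fintype α] (A : Matrix α α ℝ) (lam : ℝ)
    (P : Matrix α α ℝ) : Prop :=
  P.IsSymm ∧ P * P = P ∧
  (∀ x : α → ℝ, A *ᵥ (P *ᵥ x) = lam • (P *ᵥ x)) ∧
  (∀ x : α → ℝ, A *ᵥ x = lam • x → P *ᵥ x = x)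

section Aux

open Finset

variable {V : Type*} [Fintype V] [DecidableEq V]

noncomputable instance isoFintypeAux (G : SimpleGraph V) : Fintype (G ≃g G) :=
  Fintype.ofInjective (fun φ => (φ : V ≃ V)) (fun a b h => by
    ext v; exact congrArg (fun e : V ≃ V => e v) h)

open scoped Classical

private lemma fiber_card_const {G : SimpleGraph V} {vc v u : V} (ψ : G ≃g G)
    (h1 : ψ vc = vc) (h2 : ψ v = u) :
    (univ.filter fun φ : G ≃g G => φ vc = vc ∧ φ v = u).card
      = (univ.filter fun φ : G ≃g G => φ vc = vc ∧ φ v = v).card := by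
  have hsvc : ψ.symm vc = vc := by
    calc ψ.symm vc = ψ.symm (ψ vc) := by rw [h1]
      _ = vc := ψ.symm_apply_apply vc
  have hsu : ψ.symm u = v := by
    calc ψ.symm u = ψ.symm (ψ v) := by rw [h2]
      _ = v := ψ.symm_apply_apply v
  refine Finset.card_bij' (fun φ _ => φ.trans ψ.symm) (fun φ _ => φ.trans ψ) ?_ ?_ ?_ ?_
  · intro φ hφ
    simp only [Finset.mem_filter, Finset.mem_univ, true_and] at hφ ⊢
    exact ⟨by rw [RelIso.trans_apply, hφ.1, hsvc], by rw [RelIso.trans_apply, hφ.2, hsu]⟩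
  · intro φ hφ
    simp only [Finset.mem_filter, Finset.mem_univ, true_and] at hφ ⊢
    exact ⟨by rw [RelIso.trans_apply, hφ.1, h1], by rw [RelIso.trans_apply, hφ.2, h2]⟩
  · intro φ _
    apply DFunLike.ext
    intro a
    simp [RelIso.trans_apply]
  · intro φ _
    apply DFunLike.ext
    intro a
    simp [RelIso.trans_apply]

private lemma fiber_card_zero {G : SimpleGraph V} {vc v u : V} (h : ¬ SameOrbit G vc v u) :
    (univ.filter fun φ : G ≃g G => φ vc = vc ∧ φ v = u).card = 0 := by
  rw [Finset.card_eq_zero, Finset.filter_eq_empty_iff]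
  intro φ _
  intro hφ
  exact h ⟨φ, hφ.1, hφ.2⟩

/-- Key counting identity: summing an indicator over the stabilizer group,
evaluated at images of `v`, equals the stabilizer-of-`v` cardinality times
the number of elements of the orbit of `v` satisfying the predicate. -/
private lemma sum_orbit_indicator (G : SimpleGraph V) (vc v : V) (p : V → Prop)
    [DecidablePred p] :
    ∑ φ ∈ univ.filter (fun φ : G ≃g G => φ vc = vc), (if p (φ v) then (1:ℝ) else 0)
      = ((univ.filter fun φ : G ≃g G => φ vc = vc ∧ φ v = v).card : ℝ)
        * (Nat.card {u : V // SameOrbit G vc v u ∧ p u}) := by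
  set k : ℕ := (univ.filter fun φ : G ≃g G => φ vc = vc ∧ φ v = v).card with hk
  have hfib : ∀ u : V, (univ.filter fun φ : G ≃g G => φ vc = vc ∧ φ v = u).card
      = if SameOrbit G vc v u then k else 0 := by
    intro u
    by_cases h : SameOrbit G vc v u
    · obtain ⟨ψ, h1, h2⟩ := h
      rw [if_pos ⟨ψ, h1, h2⟩]
      exact fiber_card_const ψ h1 h2
    · rw [if_neg h]
      exact fiber_card_zero h
  have step1 : ∑ φ ∈ univ.filter (fun φ : G ≃g G => φ vc = vc), (if p (φ v) then (1:ℝ) else 0)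
      = ∑ u : V, ∑ φ ∈ (univ.filter (fun φ : G ≃g G => φ vc = vc)).filter (fun φ => φ v = u),
          (if p (φ v) then (1:ℝ) else 0) := by
    exact (Finset.sum_fiberwise_of_maps_to (fun φ _ => Finset.mem_univ (φ v)) _).symm
  rw [step1]
  have step2 : ∀ u : V,
      ∑ φ ∈ (univ.filter (fun φ : G ≃g G => φ vc = vc)).filter (fun φ => φ v = u),
          (if p (φ v) then (1:ℝ) else 0)
      = ((univ.filter fun φ : G ≃g G => φ vc = vc ∧ φ v = u).card : ℝ)
          * (if p u then (1:ℝ) else 0) := by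
    intro u
    rw [Finset.filter_filter]
    rw [Finset.sum_congr rfl (fun φ hφ => by
      rw [(Finset.mem_filter.mp hφ).2.2])]
    rw [Finset.sum_const, nsmul_eq_mul]
  simp_rw [step2, hfib]
  have step3 : ∑ u : V, ((if SameOrbit G vc v u then k else 0 : ℕ) : ℝ) * (if p u then (1:ℝ) else 0)
      = (k : ℝ) * ∑ u : V, (if SameOrbit G vc v u ∧ p u then (1:ℝ) else 0) := by
    rw [Finset.mul_sum]
    refine Finset.sum_congr rfl fun u _ => ?_
    by_cases h1 : SameOrbit G vc v u <;> by_cases h2 : p u <;> simp [h1, h2]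
  rw [step3]
  congr 1
  rw [Finset.sum_boole]
  congr 1
  rw [Nat.card_eq_fintype_card, Fintype.card_subtype]

private lemma mulVec_aut (G : SimpleGraph V) [DecidableRel G.Adj] (φ : G ≃g G)
    (y : V → ℝ) (v : V) :
    (G.adjMatrix ℝ *ᵥ fun u => y (φ u)) v = (G.adjMatrix ℝ *ᵥ y) (φ v) := by
  simp only [mulVec, dotProduct]
  rw [← Equiv.sum_comp φ.toEquiv (fun u => G.adjMatrix ℝ (φ v) u * y u)]
  refine Finset.sum_congr rfl fun u _ => ?_
  have hc : φ.toEquiv u = φ u := rfl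
  rw [hc]
  congr 1
  simp only [adjMatrix_apply]
  by_cases h : G.Adj v u
  · rw [if_pos h, if_pos (φ.map_adj_iff.mpr h)]
  · rw [if_neg h, if_neg (fun hcc => h (φ.map_adj_iff.mp hcc))]

end Aux

section Core

open Finset
open scoped Classical

variable {V W : Type*} [Fintype V] [Fintype W] [DecidableEq V] [DecidableEq W]

/-- Core lemma: any `mu`-eigenvector of the big graph takes equal values at the two
copies of `vc`. -/
private lemma eigvec_eq_at_vc
    (G : SimpleGraph V) [DecidableRel G.Adj] (H : SimpleGraph W) (vc : V)
    (Gt : SimpleGraph (V × Fin 2 ⊕ W)) [DecidableRel Gt.Adj]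
    (hC : IsConstruction1 G H vc Gt) (mu : ℝ)
    (P : Matrix V V ℝ) (hP : IsEigProjection (G.adjMatrix ℝ) mu P)
    (hPe : P *ᵥ Pi.single vc 1 = 0)
    (x : V × Fin 2 ⊕ W → ℝ) (hx : Gt.adjMatrix ℝ *ᵥ x = mu • x) :
    x (Sum.inl (vc, 0)) = x (Sum.inl (vc, 1)) := by
  obtain ⟨hC1, hC2, hC3, hC4⟩ := hC
  -- the two copies of x on V, and the boundary contributions
  set x0 : V → ℝ := fun u => x (Sum.inl (u, 0)) with hx0
  set x1 : V → ℝ := fun u => x (Sum.inl (u, 1)) with hx1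
  set F : Fin 2 → V → ℝ := fun i v => ∑ w : W,
    (if Gt.Adj (Sum.inl (v, i)) (Sum.inr w) then (1:ℝ) else 0) * x (Sum.inr w) with hF
  -- cross edges between copies are absent
  have hcross : ∀ v u : V, ∀ i j : Fin 2, i ≠ j →
      ¬ Gt.Adj (Sum.inl (v, i)) (Sum.inl (u, j)) := by
    intro v u i j hij hadj
    fin_cases i <;> fin_cases j
    · exact hij rfl
    · exact hC2 v u hadj
    · exact hC2 u v hadj.symm
    · exact hij rfl
  -- eigen equation split at (v, i)
  have hsplit : ∀ v : V, ∀ i : Fin 2,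
      mu * x (Sum.inl (v, i))
        = (G.adjMatrix ℝ *ᵥ (fun u => x (Sum.inl (u, i)))) v + F i v := by
    intro v i
    have h := congrFun hx (Sum.inl (v, i))
    rw [Pi.smul_apply, smul_eq_mul] at h
    rw [← h]
    simp only [mulVec, dotProduct, adjMatrix_apply]
    rw [Fintype.sum_sum_type, Fintype.sum_prod_type]
    have hfin : ∀ u : V, ∑ j : Fin 2,
        (if Gt.Adj (Sum.inl (v, i)) (Sum.inl (u, j)) then (1:ℝ) else 0) * x (Sum.inl (u, j))
        = (if G.Adj v u then (1:ℝ) else 0) * x (Sum.inl (u, i)) := by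
      intro u
      rw [Finset.sum_eq_single i]
      · congr 1
        by_cases h : G.Adj v u
        · rw [if_pos h, if_pos ((hC1 i v u).mpr h)]
        · rw [if_neg h, if_neg (fun hc => h ((hC1 i v u).mp hc))]
      · intro j _ hj
        rw [if_neg (hcross v u i j (Ne.symm hj)), zero_mul]
      · intro h
        exact absurd (Finset.mem_univ i) h
    rw [Finset.sum_congr rfl (fun u _ => hfin u)]
  -- the difference vector and its group average
  set z : V → ℝ := x0 - x1 with hz
  set S : Finset (G ≃g G) := univ.filter (fun φ : G ≃g G => φ vc = vc) with hS
  set zbar : V → ℝ := fun v => ∑ φ ∈ S, z (φ v) with hzbar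
  -- A z = mu z - (F 0 - F 1)
  have hAz : ∀ v : V, (G.adjMatrix ℝ *ᵥ z) v = mu * z v - (F 0 v - F 1 v) := by
    intro v
    have h0 := hsplit v 0
    have h1 := hsplit v 1
    have : (G.adjMatrix ℝ *ᵥ z) v
        = (G.adjMatrix ℝ *ᵥ x0) v - (G.adjMatrix ℝ *ᵥ x1) v := by
      rw [hz, Matrix.mulVec_sub, Pi.sub_apply]
    rw [this]
    have e0 : (G.adjMatrix ℝ *ᵥ x0) v = mu * x0 v - F 0 v := by
      rw [hx0]; simp only at h0 ⊢; linarith [h0]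
    have e1 : (G.adjMatrix ℝ *ᵥ x1) v = mu * x1 v - F 1 v := by
      rw [hx1]; simp only at h1 ⊢; linarith [h1]
    rw [e0, e1]
    simp only [hz, Pi.sub_apply]
    ring
  -- the averaged boundary term vanishes
  have hFsum : ∀ v : V, ∑ φ ∈ S, F 0 (φ v) = ∑ φ ∈ S, F 1 (φ v) := by
    intro v
    have swap : ∀ i : Fin 2, ∑ φ ∈ S, F i (φ v)
        = ∑ w : W, (∑ φ ∈ S, (if Gt.Adj (Sum.inl (φ v, i)) (Sum.inr w) then (1:ℝ) else 0))
            * x (Sum.inr w) := by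
      intro i
      rw [hF]
      simp only
      rw [Finset.sum_comm]
      refine Finset.sum_congr rfl fun w _ => ?_
      rw [Finset.sum_mul]
    rw [swap 0, swap 1]
    refine Finset.sum_congr rfl fun w _ => ?_
    congr 1
    have k0 := sum_orbit_indicator G vc v (fun u => Gt.Adj (Sum.inl (u, 0)) (Sum.inr w))
    have k1 := sum_orbit_indicator G vc v (fun u => Gt.Adj (Sum.inl (u, 1)) (Sum.inr w))
    rw [hS]
    rw [k0, k1, hC4 w v]
  -- zbar is a mu-eigenvector of A
  have hAzbar : G.adjMatrix ℝ *ᵥ zbar = mu • zbar := by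
    funext v
    have expand : (G.adjMatrix ℝ *ᵥ zbar) v = ∑ φ ∈ S, (G.adjMatrix ℝ *ᵥ z) (φ v) := by
      have h1 : ∑ φ ∈ S, (G.adjMatrix ℝ *ᵥ z) (φ v)
          = ∑ φ ∈ S, (G.adjMatrix ℝ *ᵥ fun u => z (φ u)) v :=
        Finset.sum_congr rfl fun φ _ => (mulVec_aut G φ z v).symm
      rw [h1]
      simp only [mulVec, dotProduct, hzbar]
      simp_rw [Finset.mul_sum]
      rw [Finset.sum_comm]
    rw [expand]
    rw [Finset.sum_congr rfl (fun φ _ => hAz (φ v))]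
    rw [Pi.smul_apply, smul_eq_mul, hzbar]
    simp only
    rw [Finset.sum_sub_distrib, Finset.sum_sub_distrib, hFsum v, sub_self, sub_zero,
      Finset.mul_sum]
  -- P fixes zbar
  have hPzbar : P *ᵥ zbar = zbar := hP.2.2.2 zbar hAzbar
  -- row of P at vc vanishes
  have hrow : ∀ u : V, P vc u = 0 := by
    rw [Matrix.mulVec_single] at hPe
    intro u
    have h1 : P u vc * 1 = (0 : ℝ) := congrFun hPe u
    rw [mul_one] at h1
    rw [hP.1.apply u vc]
    exact h1
  have hPz_vc : (P *ᵥ zbar) vc = 0 := by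
    simp only [mulVec, dotProduct]
    exact Finset.sum_eq_zero fun u _ => by rw [hrow u, zero_mul]
  have hzbar_vc : zbar vc = (S.card : ℝ) * z vc := by
    have hcon : ∀ φ ∈ S, z (φ vc) = z vc := by
      intro φ hφ
      rw [hS, Finset.mem_filter] at hφ
      rw [hφ.2]
    calc zbar vc = ∑ φ ∈ S, z (φ vc) := rfl
      _ = ∑ _φ ∈ S, z vc := Finset.sum_congr rfl hcon
      _ = (S.card : ℝ) * z vc := by rw [Finset.sum_const, nsmul_eq_mul]
  have hScard : (S.card : ℝ) ≠ 0 := by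
    have : (RelIso.refl G.Adj : G ≃g G) ∈ S := by
      rw [hS, Finset.mem_filter]
      exact ⟨Finset.mem_univ _, rfl⟩
    have hpos : 0 < S.card := Finset.card_pos.mpr ⟨_, this⟩
    exact_mod_cast hpos.ne'
  have hzvc : z vc = 0 := by
    have : (S.card : ℝ) * z vc = 0 := by
      rw [← hzbar_vc, ← hPzbar]
      exact hPz_vc
    exact (mul_eq_zero.mp this).resolve_left hScard
  have := hzvc
  rw [hz, Pi.sub_apply, hx0, hx1, sub_eq_zero] at this
  exact this

end Core

/-- If `mu` is an eigenvalue of `Ã` that is not induced by `G` (i.e. the orthogonal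
projection `P` of `e_{v_c}` onto the `mu`-eigenspace of `A` vanishes — in particular
this covers the case where `mu` is not an eigenvalue of `A`, when `P = 0`), then the
projections of `e_{v_c^1}` and `e_{v_c^2}` onto the `mu`-eigenspace of `Ã` coincide. -/
theorem non_induced_eigenvalue_projections_equal {V W : Type*} [Fintype V] [Fintype W]
    [DecidableEq V] [DecidableEq W]
    (G : SimpleGraph V) [DecidableRel G.Adj] (H : SimpleGraph W) (vc : V)
    (Gt : SimpleGraph (V × Fin 2 ⊕ W)) [DecidableRel Gt.Adj]
    (hC : IsConstruction1 G H vc Gt)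
    (mu : ℝ)
    (hmu : ∃ x : V × Fin 2 ⊕ W → ℝ, x ≠ 0 ∧ Gt.adjMatrix ℝ *ᵥ x = mu • x)
    (P : Matrix V V ℝ) (hP : IsEigProjection (G.adjMatrix ℝ) mu P)
    (hPe : P *ᵥ Pi.single vc 1 = 0)
    (Q : Matrix (V × Fin 2 ⊕ W) (V × Fin 2 ⊕ W) ℝ)
    (hQ : IsEigProjection (Gt.adjMatrix ℝ) mu Q) :
    Q *ᵥ Pi.single (Sum.inl (vc, 0)) 1 = Q *ᵥ Pi.single (Sum.inl (vc, 1)) 1 := by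
  set u : V × Fin 2 ⊕ W → ℝ :=
    Pi.single (Sum.inl (vc, 0)) 1 - Pi.single (Sum.inl (vc, 1)) 1 with hu
  set y : V × Fin 2 ⊕ W → ℝ := Q *ᵥ u with hy
  have hygoal : y = 0 → Q *ᵥ Pi.single (Sum.inl (vc, 0)) 1 = Q *ᵥ Pi.single (Sum.inl (vc, 1)) 1 := by
    intro h
    have : Q *ᵥ Pi.single (Sum.inl (vc, 0)) 1 - Q *ᵥ Pi.single (Sum.inl (vc, 1)) 1 = 0 := by
      rw [← Matrix.mulVec_sub, ← hu, ← hy, h]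
    exact sub_eq_zero.mp this
  apply hygoal
  -- y is a mu-eigenvector (possibly zero)
  have hyeig : Gt.adjMatrix ℝ *ᵥ y = mu • y := hQ.2.2.1 u
  have hsame : y (Sum.inl (vc, 0)) = y (Sum.inl (vc, 1)) :=
    eigvec_eq_at_vc G H vc Gt hC mu P hP hPe y hyeig
  -- dot product of y with itself is zero
  have hdot : y ⬝ᵥ y = 0 := by
    have h1 : y ⬝ᵥ y = y ⬝ᵥ (Q *ᵥ u) := by rw [← hy]
    have h2 : y ᵥ* Q = y := by
      rw [← Matrix.mulVec_transpose, hQ.1.eq, hy, Matrix.mulVec_mulVec, hQ.2.1]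
    rw [h1, Matrix.dotProduct_mulVec, h2, hu, dotProduct_sub,
      dotProduct_single, dotProduct_single, hsame]
    ring
  exact dotProduct_self_eq_zero.mp hdot
end

section
/- Let G̃ be obtained by Construction 1 from (G, H, v_c), with adjacency matrix Ã, let A be the adjacency matrix of G, and write v_c^1 = (v_c,1), v_c^2 = (v_c,2). Suppose that every eigenvalue λ of A satisfying E_λ e_{v_c} ≠ 0 (where E_λ is the orthogonal projection onto the λ-eigenspace of A) is a simple eigenvalue of Ã, i.e., its eigenspace for Ã is one-dimensional. Then v_c^1 and v_c^2 are strongly cospectral in G̃: for every eigenvalue μ of Ã, the orthogonal projection Ẽ_μ onto the μ-eigenspace of Ã satisfies Ẽ_μ e_{v_c^1} = Ẽ_μ e_{v_c^2} or Ẽ_μ e_{v_c^1} = −Ẽ_μ e_{v_c^2}. -/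
open SimpleGraph Matrix

namespace C1Aux

set_option linter.unusedSectionVars false
set_option maxHeartbeats 800000

lemma sameOrbit_equivalence {V : Type*} (G : SimpleGraph V) (vc : V) :
    Equivalence (SameOrbit G vc) where
  refl v := ⟨Iso.refl, rfl, rfl⟩
  symm := by
    rintro v w ⟨φ, h1, h2⟩
    refine ⟨φ.symm, ?_, ?_⟩
    · conv_lhs => rw [← h1]
      exact φ.symm_apply_apply vc
    · conv_lhs => rw [← h2]
      exact φ.symm_apply_apply v
  trans := by
    rintro u v w ⟨φ, h1, h2⟩ ⟨ψ, h3, h4⟩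
    refine ⟨φ.trans ψ, ?_, ?_⟩
    · show ψ (φ vc) = vc
      rw [h1, h3]
    · show ψ (φ u) = w
      rw [h2, h4]

lemma mulVec_ext {α : Type*} [Fintype α] [DecidableEq α] {M N : Matrix α α ℝ}
    (h : ∀ x, M *ᵥ x = N *ᵥ x) : M = N := by
  ext i j
  have := congrFun (h (Pi.single j 1)) i
  simpa using this

lemma eigProjection_mul_eq {α : Type*} [Fintype α] [DecidableEq α] {A : Matrix α α ℝ} {lam : ℝ}
    {P : Matrix α α ℝ} (hP : IsEigProjection A lam P) : A * P = lam • P := by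
  apply mulVec_ext
  intro x
  rw [← mulVec_mulVec, smul_mulVec]
  exact hP.2.2.1 x

lemma eigProjection_unique {α : Type*} [Fintype α] [DecidableEq α] {A : Matrix α α ℝ} {lam : ℝ}
    {P P' : Matrix α α ℝ} (hP : IsEigProjection A lam P) (hP' : IsEigProjection A lam P') :
    P = P' := by
  have h1 : P' * P = P := by
    apply mulVec_ext
    intro x
    rw [← mulVec_mulVec]
    exact hP'.2.2.2 _ (hP.2.2.1 x)
  have h2 := congrArg Matrix.transpose h1
  rw [Matrix.transpose_mul, hP.1, hP'.1] at h2
  -- h2 : P * P' = P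
  have h3 : P * P' = P' := by
    apply mulVec_ext
    intro x
    rw [← mulVec_mulVec]
    exact hP.2.2.2 _ (hP'.2.2.1 x)
  rw [← h2, h3]

section Graph

variable {V W : Type*} [Fintype V] [Fintype W] [DecidableEq V] [DecidableEq W]
  (G : SimpleGraph V) [DecidableRel G.Adj] (vc : V)

/-- automorphism intertwining -/
lemma adjMatrix_mulVec_comp (φ : G ≃g G) (x : V → ℝ) :
    G.adjMatrix ℝ *ᵥ (x ∘ φ) = (G.adjMatrix ℝ *ᵥ x) ∘ φ := by
  funext v
  simp only [Matrix.mulVec, dotProduct, Function.comp_apply]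
  exact Fintype.sum_equiv φ.toEquiv _ _ (fun w => by
    simp [SimpleGraph.adjMatrix_apply, φ.map_adj_iff])

lemma adjMatrix_submatrix (φ : G ≃g G) :
    (G.adjMatrix ℝ).submatrix φ φ = G.adjMatrix ℝ := by
  ext v w
  simp [Matrix.submatrix_apply, SimpleGraph.adjMatrix_apply, φ.map_adj_iff]

lemma eigProjection_submatrix {lam : ℝ} {P : Matrix V V ℝ}
    (hP : IsEigProjection (G.adjMatrix ℝ) lam P) (φ : G ≃g G) :
    IsEigProjection (G.adjMatrix ℝ) lam (P.submatrix φ φ) := by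
  have hsub : P.submatrix ⇑φ ⇑φ = P.submatrix φ.toEquiv φ.toEquiv := rfl
  refine ⟨?_, ?_, ?_, ?_⟩
  · rw [Matrix.IsSymm]
    ext i j
    have hs : ∀ a b, P a b = P b a := fun a b => by
      conv_lhs => rw [← hP.1]
      rfl
    simp [Matrix.transpose_apply, Matrix.submatrix_apply, hs]
  · rw [hsub, Matrix.submatrix_mul_equiv, hP.2.1]
  · intro x
    have hsubA : (G.adjMatrix ℝ).submatrix ⇑φ.toEquiv ⇑φ.toEquiv = G.adjMatrix ℝ :=
      adjMatrix_submatrix G φ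
    have hAP : G.adjMatrix ℝ * P.submatrix ⇑φ ⇑φ = lam • P.submatrix ⇑φ ⇑φ := by
      rw [hsub, ← hsubA, Matrix.submatrix_mul_equiv, eigProjection_mul_eq hP]
      ext i j
      simp [Matrix.submatrix_apply]
    rw [mulVec_mulVec, hAP, smul_mulVec]
  · intro x hx
    rw [hsub, Matrix.submatrix_mulVec_equiv]
    have h1 : G.adjMatrix ℝ *ᵥ (x ∘ ⇑φ.toEquiv.symm) = lam • (x ∘ ⇑φ.toEquiv.symm) := by
      have h2 := adjMatrix_mulVec_comp G φ.symm x
      rw [hx] at h2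
      exact h2
    rw [hP.2.2.2 _ h1]
    funext v
    exact congrArg x (φ.symm_apply_apply v)

lemma eigProjection_orbitConst {lam : ℝ} {P : Matrix V V ℝ}
    (hP : IsEigProjection (G.adjMatrix ℝ) lam P) {v w : V}
    (h : SameOrbit G vc v w) :
    (P *ᵥ Pi.single vc 1) v = (P *ᵥ Pi.single vc 1) w := by
  obtain ⟨φ, h1, h2⟩ := h
  have := eigProjection_unique hP (eigProjection_submatrix G hP φ)
  have hvw : P v vc = P w vc := by
    conv_lhs => rw [this]
    rw [Matrix.submatrix_apply, h1, h2]
  simp [Matrix.mulVec_single, hvw]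

end Graph


section Spectral

variable {V : Type*} [Fintype V] [DecidableEq V] {A : Matrix V V ℝ}

/-- The chosen orthonormal eigenbasis, as plain functions. -/
noncomputable def evec (hA : A.IsHermitian) (i : V) : V → ℝ := hA.eigenvectorBasis i

lemma evec_dot (hA : A.IsHermitian) (i j : V) :
    evec hA i ⬝ᵥ evec hA j = if i = j then 1 else 0 := by
  have hU : (star (hA.eigenvectorUnitary : Matrix V V ℝ)) * hA.eigenvectorUnitary = 1 :=
    Unitary.coe_star_mul_self hA.eigenvectorUnitary
  have h := congrFun (congrFun hU i) j
  simpa [Matrix.mul_apply, Matrix.star_apply, Matrix.one_apply, evec, dotProduct,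
    Matrix.IsHermitian.eigenvectorUnitary_apply] using h

lemma evec_complete (hA : A.IsHermitian) :
    ∑ i, vecMulVec (evec hA i) (evec hA i) = (1 : Matrix V V ℝ) := by
  have hU : (hA.eigenvectorUnitary : Matrix V V ℝ) * star (hA.eigenvectorUnitary : Matrix V V ℝ)
      = 1 := Unitary.coe_mul_star_self hA.eigenvectorUnitary
  ext v w
  have h := congrFun (congrFun hU v) w
  rw [Matrix.sum_apply]
  simpa [Matrix.mul_apply, Matrix.star_apply, Matrix.one_apply, evec,
    Matrix.vecMulVec_apply, Matrix.IsHermitian.eigenvectorUnitary_apply] using h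

lemma vecMulVec_mulVec' (a b x : V → ℝ) : vecMulVec a b *ᵥ x = (b ⬝ᵥ x) • a := by
  funext i
  simp only [Matrix.mulVec, dotProduct, Matrix.vecMulVec_apply, Pi.smul_apply, smul_eq_mul,
    Finset.sum_mul]
  exact Finset.sum_congr rfl (fun j _ => by ring)

lemma sum_mulVec' {ι : Type*} (s : Finset ι) (M : ι → Matrix V V ℝ) (x : V → ℝ) :
    (∑ i ∈ s, M i) *ᵥ x = ∑ i ∈ s, M i *ᵥ x := by
  funext v
  simp only [Matrix.mulVec, dotProduct, Matrix.sum_apply, Finset.sum_apply, Finset.sum_mul]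
  exact Finset.sum_comm

lemma mulVec_sum_vec {ι : Type*} (s : Finset ι) (M : Matrix V V ℝ) (x : ι → V → ℝ) :
    M *ᵥ (∑ i ∈ s, x i) = ∑ i ∈ s, M *ᵥ x i := by
  funext v
  simp only [Matrix.mulVec, dotProduct, Finset.sum_apply, Finset.mul_sum]
  exact Finset.sum_comm

/-- The spectral projection of a real symmetric matrix at the value `t`. -/
noncomputable def projAt (hA : A.IsHermitian) (t : ℝ) : Matrix V V ℝ :=
  ∑ i ∈ Finset.univ.filter (fun i => hA.eigenvalues i = t),
    vecMulVec (evec hA i) (evec hA i)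

lemma projAt_mulVec (hA : A.IsHermitian) (t : ℝ) (x : V → ℝ) :
    projAt hA t *ᵥ x = ∑ i ∈ Finset.univ.filter (fun i => hA.eigenvalues i = t),
      (evec hA i ⬝ᵥ x) • evec hA i := by
  rw [projAt, sum_mulVec']
  exact Finset.sum_congr rfl (fun i _ => vecMulVec_mulVec' _ _ _)

lemma dot_sum_smul (hA : A.IsHermitian) (s : Finset V) (c : V → ℝ) (j : V) :
    evec hA j ⬝ᵥ (∑ i ∈ s, c i • evec hA i) = if j ∈ s then c j else 0 := by
  have h1 : evec hA j ⬝ᵥ (∑ i ∈ s, c i • evec hA i)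
      = ∑ i ∈ s, c i * (evec hA j ⬝ᵥ evec hA i) := by
    simp only [dotProduct, Finset.sum_apply, Pi.smul_apply, smul_eq_mul, Finset.mul_sum]
    rw [Finset.sum_comm]
    exact Finset.sum_congr rfl fun i _ => Finset.sum_congr rfl fun v _ => by ring
  rw [h1]
  simp only [evec_dot hA, mul_ite, mul_one, mul_zero]
  exact Finset.sum_ite_eq s j c

lemma isHermitian_transpose_eq (hA : A.IsHermitian) : Aᵀ = A := by
  ext i j
  rw [Matrix.transpose_apply]
  conv_lhs => rw [← hA]
  simp [Matrix.conjTranspose_apply]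

lemma dot_mulVec_symm (hA : A.IsHermitian) (a b : V → ℝ) :
    (A *ᵥ a) ⬝ᵥ b = a ⬝ᵥ (A *ᵥ b) := by
  rw [Matrix.dotProduct_mulVec, ← Matrix.mulVec_transpose, isHermitian_transpose_eq hA,
    dotProduct_comm]

lemma mulVec_evec (hA : A.IsHermitian) (i : V) :
    A *ᵥ evec hA i = hA.eigenvalues i • evec hA i :=
  hA.mulVec_eigenvectorBasis i

lemma projAt_isEigProjection (hA : A.IsHermitian) (t : ℝ) :
    IsEigProjection A t (projAt hA t) := by
  classical
  refine ⟨?_, ?_, ?_, ?_⟩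
  · rw [Matrix.IsSymm]
    ext i j
    simp [projAt, Matrix.transpose_apply, Matrix.sum_apply, Matrix.vecMulVec_apply, mul_comm]
  · apply mulVec_ext
    intro x
    rw [← mulVec_mulVec, projAt_mulVec, projAt_mulVec]
    refine Finset.sum_congr rfl (fun j hj => ?_)
    rw [dot_sum_smul hA, if_pos hj]
  · intro x
    rw [projAt_mulVec, mulVec_sum_vec]
    rw [Finset.smul_sum]
    refine Finset.sum_congr rfl (fun i hi => ?_)
    rw [Matrix.mulVec_smul, mulVec_evec hA i, (Finset.mem_filter.mp hi).2, smul_comm]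
  · intro x hx
    have hexp : ∑ i, (evec hA i ⬝ᵥ x) • evec hA i = x := by
      calc ∑ i, (evec hA i ⬝ᵥ x) • evec hA i
          = ∑ i, vecMulVec (evec hA i) (evec hA i) *ᵥ x :=
            Finset.sum_congr rfl (fun i _ => (vecMulVec_mulVec' _ _ _).symm)
        _ = (∑ i, vecMulVec (evec hA i) (evec hA i)) *ᵥ x := (sum_mulVec' _ _ _).symm
        _ = x := by rw [evec_complete hA, Matrix.one_mulVec]
    have hzero : ∀ i, hA.eigenvalues i ≠ t → evec hA i ⬝ᵥ x = 0 := by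
      intro i hi
      have h2 : (A *ᵥ evec hA i) ⬝ᵥ x = hA.eigenvalues i * (evec hA i ⬝ᵥ x) := by
        rw [mulVec_evec hA i, smul_dotProduct]
        rfl
      have h3 : (A *ᵥ evec hA i) ⬝ᵥ x = t * (evec hA i ⬝ᵥ x) := by
        rw [dot_mulVec_symm hA, hx, dotProduct_smul]
        rfl
      have h4 : (hA.eigenvalues i - t) * (evec hA i ⬝ᵥ x) = 0 := by
        rw [sub_mul, ← h2, ← h3, sub_self]
      rcases mul_eq_zero.mp h4 with h | h
      · exact absurd (sub_eq_zero.mp h) hi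
      · exact h
    rw [projAt_mulVec]
    conv_rhs => rw [← hexp]
    rw [← Finset.sum_filter_add_sum_filter_not Finset.univ (fun i => hA.eigenvalues i = t)
      (fun i => (evec hA i ⬝ᵥ x) • evec hA i)]
    rw [show ∑ i ∈ Finset.univ.filter (fun i => ¬ hA.eigenvalues i = t),
        (evec hA i ⬝ᵥ x) • evec hA i = 0 from ?_]
    · rw [add_zero]
    · refine Finset.sum_eq_zero (fun i hi => ?_)
      rw [hzero i (Finset.mem_filter.mp hi).2, zero_smul]

lemma sum_projAt (hA : A.IsHermitian) :
    ∑ t ∈ Finset.univ.image hA.eigenvalues, projAt hA t = (1 : Matrix V V ℝ) := by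
  classical
  rw [show ∑ t ∈ Finset.univ.image hA.eigenvalues, projAt hA t
      = ∑ t ∈ Finset.univ.image hA.eigenvalues,
          ∑ i ∈ Finset.univ.filter (fun i => hA.eigenvalues i = t),
            vecMulVec (evec hA i) (evec hA i) from rfl]
  rw [Finset.sum_fiberwise_eq_sum_filter]
  rw [Finset.filter_true_of_mem (fun i _ => Finset.mem_image_of_mem _ (Finset.mem_univ i))]
  exact evec_complete hA

end Spectral

section Constr

variable {V W : Type*} [Fintype V] [Fintype W] [DecidableEq V] [DecidableEq W]
  {G : SimpleGraph V} [DecidableRel G.Adj] {H : SimpleGraph W} {vc : V}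
  {Gt : SimpleGraph (V × Fin 2 ⊕ W)} [DecidableRel Gt.Adj]

/-- The map `x ↦ (x, -x, 0)`. -/
def SextL (V W : Type*) : (V → ℝ) →ₗ[ℝ] (V × Fin 2 ⊕ W → ℝ) where
  toFun x := Sum.elim (fun p => if p.2 = 0 then x p.1 else -x p.1) 0
  map_add' x y := by
    funext u
    rcases u with p | w
    · by_cases h : p.2 = 0 <;> simp [h] <;> ring
    · simp
  map_smul' c x := by
    funext u
    rcases u with p | w
    · by_cases h : p.2 = 0 <;> simp [h] <;> ring
    · simp

@[simp] lemma SextL_inl0 (x : V → ℝ) (v : V) : SextL V W x (Sum.inl (v, 0)) = x v := by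
  show (if (0 : Fin 2) = 0 then x v else -x v) = x v
  simp

@[simp] lemma SextL_inl1 (x : V → ℝ) (v : V) : SextL V W x (Sum.inl (v, 1)) = -x v := by
  show (if (1 : Fin 2) = 0 then x v else -x v) = -x v
  simp

@[simp] lemma SextL_inr (x : V → ℝ) (w : W) : SextL V W x (Sum.inr w) = 0 := rfl

lemma key_count (hC : IsConstruction1 G H vc Gt) {x : V → ℝ}
    (hx : ∀ v w, SameOrbit G vc v w → x v = x w) (w : W) :
    ∑ v, (if Gt.Adj (Sum.inl (v, 0)) (Sum.inr w) then x v else 0)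
      = ∑ v, (if Gt.Adj (Sum.inl (v, 1)) (Sum.inr w) then x v else 0) := by
  classical
  let s : Setoid V := ⟨SameOrbit G vc, sameOrbit_equivalence G vc⟩
  haveI : Fintype (Quotient s) := Fintype.ofFinite _
  have key : ∀ (p : V → Prop) (_ : DecidablePred p),
      ∑ v, (if p v then x v else 0)
        = ∑ c : Quotient s, x (Quotient.out c) *
            (Nat.card {v : V // SameOrbit G vc (Quotient.out c) v ∧ p v} : ℝ) := by
    intro p hp
    rw [← Finset.sum_fiberwise Finset.univ (fun v => (⟦v⟧ : Quotient s))
      (fun v => if p v then x v else 0)]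
    refine Finset.sum_congr rfl (fun c _ => ?_)
    have hxc : ∀ v ∈ Finset.univ.filter (fun v => (⟦v⟧ : Quotient s) = c),
        (if p v then x v else 0) = x (Quotient.out c) * (if p v then 1 else 0) := by
      intro v hv
      have h1 : (⟦v⟧ : Quotient s) = c := (Finset.mem_filter.mp hv).2
      have h2 : SameOrbit G vc v (Quotient.out c) :=
        Quotient.exact (h1.trans (Quotient.out_eq c).symm)
      rw [hx v _ h2]
      by_cases hpv : p v <;> simp [hpv]
    rw [Finset.sum_congr rfl hxc, ← Finset.mul_sum]
    congr 1
    rw [Finset.sum_boole, Finset.filter_filter]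
    have hcard : (Finset.univ.filter
        (fun v => (⟦v⟧ : Quotient s) = c ∧ p v)).card
        = Nat.card {v : V // SameOrbit G vc (Quotient.out c) v ∧ p v} := by
      rw [← Fintype.card_subtype, Nat.card_eq_fintype_card]
      apply Fintype.card_congr
      refine Equiv.subtypeEquivRight (fun v => and_congr_left' ?_)
      constructor
      · intro h
        exact (sameOrbit_equivalence G vc).symm
          (Quotient.exact (h.trans (Quotient.out_eq c).symm))
      · intro h
        rw [← Quotient.out_eq c]
        exact Quotient.sound ((sameOrbit_equivalence G vc).symm h)
    rw [hcard]
  rw [key (fun v => Gt.Adj (Sum.inl (v, 0)) (Sum.inr w)) inferInstance,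
    key (fun v => Gt.Adj (Sum.inl (v, 1)) (Sum.inr w)) inferInstance]
  refine Finset.sum_congr rfl (fun c _ => ?_)
  rw [hC.2.2.2 w (Quotient.out c)]

lemma intertwine (hC : IsConstruction1 G H vc Gt) {x : V → ℝ}
    (hx : ∀ v w, SameOrbit G vc v w → x v = x w) :
    Gt.adjMatrix ℝ *ᵥ SextL V W x = SextL V W (G.adjMatrix ℝ *ᵥ x) := by
  have hcross' : ∀ a b : V, ¬ Gt.Adj (Sum.inl (a, 1)) (Sum.inl (b, 0)) :=
    fun a b h => hC.2.1 b a h.symm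
  funext u
  rcases u with ⟨v, i⟩ | w
  · fin_cases i
    · show (Gt.adjMatrix ℝ *ᵥ SextL V W x) (Sum.inl (v, 0)) = (G.adjMatrix ℝ *ᵥ x) v
      simp only [Matrix.mulVec, dotProduct, Fintype.sum_sum_type, Fintype.sum_prod_type,
        Fin.sum_univ_two, SextL_inl0, SextL_inl1, SextL_inr, mul_zero, Finset.sum_const_zero,
        add_zero, SimpleGraph.adjMatrix_apply]
      refine Finset.sum_congr rfl (fun w _ => ?_)
      simp [hC.1 0 v w, hC.2.1 v w]
    · show (Gt.adjMatrix ℝ *ᵥ SextL V W x) (Sum.inl (v, 1)) = -((G.adjMatrix ℝ *ᵥ x) v)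
      simp only [Matrix.mulVec, dotProduct, Fintype.sum_sum_type, Fintype.sum_prod_type,
        Fin.sum_univ_two, SextL_inl0, SextL_inl1, SextL_inr, mul_zero, Finset.sum_const_zero,
        add_zero, SimpleGraph.adjMatrix_apply, ← Finset.sum_neg_distrib]
      refine Finset.sum_congr rfl (fun w _ => ?_)
      simp [hC.1 1 v w, hcross' v w]
  · show (Gt.adjMatrix ℝ *ᵥ SextL V W x) (Sum.inr w) = 0
    simp only [Matrix.mulVec, dotProduct, Fintype.sum_sum_type, Fintype.sum_prod_type,
      Fin.sum_univ_two, SextL_inl0, SextL_inl1, SextL_inr, mul_zero, Finset.sum_const_zero,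
      add_zero, SimpleGraph.adjMatrix_apply]
    have h0 : ∀ v : V, (if Gt.Adj (Sum.inr w) (Sum.inl (v, 0)) then (1:ℝ) else 0) * x v
        = (if Gt.Adj (Sum.inl (v, 0)) (Sum.inr w) then x v else 0) := by
      intro v
      by_cases h : Gt.Adj (Sum.inl (v, 0)) (Sum.inr w)
      · rw [if_pos h.symm, if_pos h, one_mul]
      · rw [if_neg (fun hh => h hh.symm), if_neg h, zero_mul]
    have h1 : ∀ v : V, (if Gt.Adj (Sum.inr w) (Sum.inl (v, 1)) then (1:ℝ) else 0) * (-x v)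
        = -(if Gt.Adj (Sum.inl (v, 1)) (Sum.inr w) then x v else 0) := by
      intro v
      by_cases h : Gt.Adj (Sum.inl (v, 1)) (Sum.inr w)
      · rw [if_pos h.symm, if_pos h, one_mul]
      · rw [if_neg (fun hh => h hh.symm), if_neg h, zero_mul, neg_zero]
    calc ∑ v, ((if Gt.Adj (Sum.inr w) (Sum.inl (v, 0)) then (1:ℝ) else 0) * x v
            + (if Gt.Adj (Sum.inr w) (Sum.inl (v, 1)) then (1:ℝ) else 0) * (-x v))
        = ∑ v, ((if Gt.Adj (Sum.inl (v, 0)) (Sum.inr w) then x v else 0)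
            + -(if Gt.Adj (Sum.inl (v, 1)) (Sum.inr w) then x v else 0)) := by
          exact Finset.sum_congr rfl (fun v _ => by rw [h0 v, h1 v])
      _ = 0 := by
          rw [Finset.sum_add_distrib, Finset.sum_neg_distrib, key_count hC hx w,
            add_neg_cancel]

lemma isSymm_isHermitian {α : Type*} [Fintype α] {M : Matrix α α ℝ} (h : M.IsSymm) :
    M.IsHermitian := by
  show Mᴴ = M
  ext i j
  rw [Matrix.conjTranspose_apply, star_trivial]
  exact congrFun (congrFun h i) j

end Constr

end C1Aux

open C1Aux

/-- If every eigenvalue of `A(G)` whose eigenprojection does not annihilate `e_{v_c}`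
is a simple eigenvalue of `Ã`, then the two copies of `v_c` are strongly cospectral
in the graph obtained by Construction 1. -/
theorem construction1_strongly_cospectral {V W : Type*} [Fintype V] [Fintype W]
    [DecidableEq V] [DecidableEq W]
    (G : SimpleGraph V) [DecidableRel G.Adj] (H : SimpleGraph W) (vc : V)
    (Gt : SimpleGraph (V × Fin 2 ⊕ W)) [DecidableRel Gt.Adj]
    (hC : IsConstruction1 G H vc Gt)
    (hsimple : ∀ (lam : ℝ) (P : Matrix V V ℝ),
      (∃ x : V → ℝ, x ≠ 0 ∧ G.adjMatrix ℝ *ᵥ x = lam • x) →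
      IsEigProjection (G.adjMatrix ℝ) lam P →
      P *ᵥ Pi.single vc 1 ≠ 0 →
      Module.finrank ℝ
        (Module.End.eigenspace (Matrix.toLin' (Gt.adjMatrix ℝ)) lam) = 1) :
    ∀ (mu : ℝ) (Q : Matrix (V × Fin 2 ⊕ W) (V × Fin 2 ⊕ W) ℝ),
      IsEigProjection (Gt.adjMatrix ℝ) mu Q →
      Q *ᵥ Pi.single (Sum.inl (vc, 0)) 1 = Q *ᵥ Pi.single (Sum.inl (vc, 1)) 1 ∨
      Q *ᵥ Pi.single (Sum.inl (vc, 0)) 1 = -(Q *ᵥ Pi.single (Sum.inl (vc, 1)) 1) := by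
  classical
  intro mu Q hQ
  have hA : (G.adjMatrix ℝ).IsHermitian := isSymm_isHermitian (SimpleGraph.isSymm_adjMatrix G)
  have hAt : (Gt.adjMatrix ℝ).IsHermitian := isSymm_isHermitian (SimpleGraph.isSymm_adjMatrix Gt)
  have hAtQ : Gt.adjMatrix ℝ * Q = mu • Q := eigProjection_mul_eq hQ
  have hQAt : Q * Gt.adjMatrix ℝ = mu • Q := by
    have h := congrArg Matrix.transpose hAtQ
    rwa [Matrix.transpose_mul, hQ.1, isHermitian_transpose_eq hAt, Matrix.transpose_smul,
      hQ.1] at h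
  have hkill : ∀ (lam' : ℝ) (z : V × Fin 2 ⊕ W → ℝ),
      Gt.adjMatrix ℝ *ᵥ z = lam' • z → lam' ≠ mu → Q *ᵥ z = 0 := by
    intro lam' z hz hne
    have h1 : Q *ᵥ (Gt.adjMatrix ℝ *ᵥ z) = mu • (Q *ᵥ z) := by
      rw [mulVec_mulVec, hQAt, smul_mulVec]
    have h2 : Q *ᵥ (Gt.adjMatrix ℝ *ᵥ z) = lam' • (Q *ᵥ z) := by
      rw [hz, Matrix.mulVec_smul]
    have h3 : (lam' - mu) • (Q *ᵥ z) = 0 := by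
      rw [sub_smul, ← h1, ← h2, sub_self]
    rcases smul_eq_zero.mp h3 with h | h
    · exact absurd (sub_eq_zero.mp h) hne
    · exact h
  have hSingle : Pi.single (Sum.inl (vc, 0)) (1:ℝ) - Pi.single (Sum.inl (vc, 1)) 1
      = SextL V W (Pi.single vc 1) := by
    funext u
    rcases u with ⟨v, i⟩ | w
    · fin_cases i <;> simp [Pi.single_apply]
    · simp [Pi.single_apply]
  by_cases h0 : projAt hA mu *ᵥ Pi.single vc 1 = 0
  · left
    have hQd : Q *ᵥ (Pi.single (Sum.inl (vc, 0)) (1:ℝ) - Pi.single (Sum.inl (vc, 1)) 1) = 0 := by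
      rw [hSingle]
      have hde : (Pi.single vc 1 : V → ℝ)
          = ∑ t ∈ Finset.univ.image hA.eigenvalues, projAt hA t *ᵥ Pi.single vc 1 := by
        conv_lhs => rw [← Matrix.one_mulVec (Pi.single vc 1 : V → ℝ), ← sum_projAt hA]
        rw [sum_mulVec']
      rw [hde, map_sum, mulVec_sum_vec]
      refine Finset.sum_eq_zero (fun t _ => ?_)
      have hprojt := projAt_isEigProjection hA t
      have hxt : G.adjMatrix ℝ *ᵥ (projAt hA t *ᵥ Pi.single vc 1)
          = t • (projAt hA t *ᵥ Pi.single vc 1) := hprojt.2.2.1 _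
      have horbt : ∀ v w, SameOrbit G vc v w →
          (projAt hA t *ᵥ Pi.single vc 1) v = (projAt hA t *ᵥ Pi.single vc 1) w :=
        fun v w h => eigProjection_orbitConst G vc hprojt h
      by_cases hmu : t = mu
      · subst hmu
        rw [h0, map_zero, Matrix.mulVec_zero]
      · refine hkill t _ ?_ hmu
        rw [intertwine hC horbt, hxt, _root_.map_smul]
    rw [Matrix.mulVec_sub] at hQd
    exact sub_eq_zero.mp hQd
  · right
    have hproj := projAt_isEigProjection hA mu
    have hAx : G.adjMatrix ℝ *ᵥ (projAt hA mu *ᵥ Pi.single vc 1)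
        = mu • (projAt hA mu *ᵥ Pi.single vc 1) := hproj.2.2.1 _
    have hrank := hsimple mu (projAt hA mu) ⟨_, h0, hAx⟩ hproj h0
    set x : V → ℝ := projAt hA mu *ᵥ Pi.single vc 1 with hxdef
    set sx : V × Fin 2 ⊕ W → ℝ := SextL V W x with hsxdef
    have hsx0 : sx ≠ 0 := by
      intro h
      apply h0
      funext v
      have h2 := congrFun h (Sum.inl (v, 0))
      simpa [hsxdef] using h2
    have horb : ∀ v w, SameOrbit G vc v w → x v = x w :=
      fun v w h => eigProjection_orbitConst G vc hproj h
    have hAtsx : Gt.adjMatrix ℝ *ᵥ sx = mu • sx := by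
      rw [hsxdef, intertwine hC horb, hAx, _root_.map_smul]
    have hsx_mem : sx ∈ Module.End.eigenspace (Matrix.toLin' (Gt.adjMatrix ℝ)) mu := by
      rw [Module.End.mem_eigenspace_iff, Matrix.toLin'_apply]
      exact hAtsx
    have hspan : Module.End.eigenspace (Matrix.toLin' (Gt.adjMatrix ℝ)) mu
        = Submodule.span ℝ {sx} := by
      symm
      apply Submodule.eq_of_le_of_finrank_le
      · rw [Submodule.span_le, Set.singleton_subset_iff]
        exact hsx_mem
      · rw [hrank, finrank_span_singleton hsx0]
    set z : V × Fin 2 ⊕ W → ℝ :=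
      Pi.single (Sum.inl (vc, 0)) 1 + Pi.single (Sum.inl (vc, 1)) 1 with hzdef
    have hy_mem : Q *ᵥ z ∈ Submodule.span ℝ {sx} := by
      rw [← hspan, Module.End.mem_eigenspace_iff, Matrix.toLin'_apply, mulVec_mulVec, hAtQ,
        smul_mulVec]
    obtain ⟨c, hc⟩ := Submodule.mem_span_singleton.mp hy_mem
    have hdot : sx ⬝ᵥ z = 0 := by
      rw [hzdef, dotProduct_add, dotProduct_single, dotProduct_single]
      have hs1 : sx (Sum.inl (vc, 0)) = x vc := by simp [hsxdef]
      have hs2 : sx (Sum.inl (vc, 1)) = -x vc := by simp [hsxdef]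
      rw [hs1, hs2]
      ring
    have hyz : (Q *ᵥ z) ⬝ᵥ z = 0 := by
      rw [← hc, smul_dotProduct, hdot, smul_zero]
    have hQH : Q.IsHermitian := isSymm_isHermitian hQ.1
    have hyy : (Q *ᵥ z) ⬝ᵥ (Q *ᵥ z) = 0 := by
      have h1 : (Q *ᵥ (Q *ᵥ z)) ⬝ᵥ z = (Q *ᵥ z) ⬝ᵥ (Q *ᵥ z) :=
        dot_mulVec_symm hQH (Q *ᵥ z) z
      rw [← h1, mulVec_mulVec, hQ.2.1, hyz]
    have hy0 : Q *ᵥ z = 0 := dotProduct_self_eq_zero.mp hyy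
    rw [hzdef, Matrix.mulVec_add] at hy0
    exact eq_neg_of_add_eq_zero_left hy0
end
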